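/- arXiv:2305.06846 — 3 statements merged into one kernel-verified Lean document; each statement's English description precedes it below -/
import Mathlib

section
/- Let G be a finite group of order mn (written multiplicatively), let H be a normal subgroup of G of order n, and suppose there exists an (m, n, m−1, (m−2)/n)-RDS in G relative to H (so in particular n divides m−2). Then there exists a family of subsets of G that is simultaneously an (mn, n, m−1, m−2, 0)-DPDF and an (mn, n, m−1, (m−2)(n−1), (m−1)n)-EPDF in G, whose sets partition G∖H. -/
open Finset

/-- The multiset of internal differences (quotients) of a finite subset of a group. -/
def mulDInt {G : Type*} [Group G] [DecidableEq G] (D : Finset G) : Multiset G :=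
  ((D ×ˢ D).filter fun p => p.1 ≠ p.2).val.map fun p => p.1 * p.2⁻¹

/-- The multiset of external differences (quotients) between two finite subsets of a group. -/
def mulDExt {G : Type*} [Group G] (D₁ D₂ : Finset G) : Multiset G :=
  (D₁ ×ˢ D₂).val.map fun p => p.1 * p.2⁻¹

/-- The multiset union of the internal differences of a family of sets. -/
def MulIntFam {G : Type*} [Group G] [DecidableEq G] {ι : Type*} [Fintype ι]
    (A : ι → Finset G) : Multiset G :=
  ∑ i, mulDInt (A i)

/-- The multiset union of external differences over ordered pairs of distinct sets. -/
def MulExtFam {G : Type*} [Group G] [DecidableEq G] {ι : Type*} [Fintype ι] [DecidableEq ι]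
    (A : ι → Finset G) : Multiset G :=
  ∑ i, ∑ j ∈ Finset.univ.erase i, mulDExt (A i) (A j)


section AuxLemmas

variable {G : Type*} [Group G] [DecidableEq G]

private lemma count_mulDInt (D : Finset G) (g : G) :
    (mulDInt D).count g = ((D ×ˢ D).filter fun p => p.1 ≠ p.2 ∧ p.1 * p.2⁻¹ = g).card := by
  rw [mulDInt, Multiset.count_map]
  rw [← Finset.filter_val, Finset.filter_filter, ← Finset.card_def]
  congr 1
  apply Finset.filter_congr
  intro p _
  constructor <;> (rintro ⟨h1, h2⟩; exact ⟨h1, h2.symm⟩)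

private lemma count_mulDExt (D₁ D₂ : Finset G) (g : G) :
    (mulDExt D₁ D₂).count g = ((D₁ ×ˢ D₂).filter fun p => p.1 * p.2⁻¹ = g).card := by
  rw [mulDExt, Multiset.count_map, ← Finset.filter_val, ← Finset.card_def]
  congr 1
  apply Finset.filter_congr
  intro p _
  exact eq_comm

private lemma count_mulDInt_image_mul_right (D : Finset G) (a g : G) :
    (mulDInt (D.image (fun x => x * a))).count g = (mulDInt D).count g := by
  rw [count_mulDInt, count_mulDInt]
  apply Finset.card_nbij' (fun p => (p.1 * a⁻¹, p.2 * a⁻¹)) (fun p => (p.1 * a, p.2 * a))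
  · rintro ⟨x, y⟩ hp
    simp only [mem_coe, mem_filter, mem_product, mem_image] at hp ⊢
    obtain ⟨⟨⟨x', hx', rfl⟩, ⟨y', hy', rfl⟩⟩, hne, heq⟩ := hp
    simp only [mul_inv_cancel_right]
    refine ⟨⟨hx', hy'⟩, ?_, ?_⟩
    · intro h; exact hne (by rw [h])
    · rw [← heq]; group
  · rintro ⟨x, y⟩ hp
    simp only [mem_coe, mem_filter, mem_product, mem_image] at hp ⊢
    obtain ⟨⟨hx, hy⟩, hne, heq⟩ := hp
    refine ⟨⟨⟨x, hx, rfl⟩, ⟨y, hy, rfl⟩⟩, ?_, ?_⟩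
    · intro h; exact hne (mul_right_cancel h)
    · rw [← heq]; group
  · rintro ⟨x, y⟩ _; simp
  · rintro ⟨x, y⟩ _; simp

end AuxLemmas

/-- A `(v,s,k,lam,mu)`-disjoint partial difference family in the multiplicative group `G`. -/
def IsMulDPDF (G : Type*) [Group G] [Fintype G] [DecidableEq G] {ι : Type*} [Fintype ι]
    (v s k lam mu : ℕ) (A : ι → Finset G) : Prop :=
  Fintype.card G = v ∧ Fintype.card ι = s ∧
  (∀ i, (A i).card = k) ∧ (∀ i, (1 : G) ∉ A i) ∧
  (∀ i j, i ≠ j → Disjoint (A i) (A j)) ∧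
  (∀ g : G, g ≠ 1 → (∃ i, g ∈ A i) → (MulIntFam A).count g = lam) ∧
  (∀ g : G, g ≠ 1 → (∀ i, g ∉ A i) → (MulIntFam A).count g = mu)

/-- A `(v,s,k,lam,mu)`-external partial difference family in the multiplicative group `G`. -/
def IsMulEPDF (G : Type*) [Group G] [Fintype G] [DecidableEq G] {ι : Type*} [Fintype ι]
    [DecidableEq ι] (v s k lam mu : ℕ) (A : ι → Finset G) : Prop :=
  Fintype.card G = v ∧ Fintype.card ι = s ∧
  (∀ i, (A i).card = k) ∧ (∀ i, (1 : G) ∉ A i) ∧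
  (∀ i j, i ≠ j → Disjoint (A i) (A j)) ∧
  (∀ g : G, g ≠ 1 → (∃ i, g ∈ A i) → (MulExtFam A).count g = lam) ∧
  (∀ g : G, g ≠ 1 → (∀ i, g ∉ A i) → (MulExtFam A).count g = mu)

/-- An `(m,n,k,lam)`-relative difference set in `G` relative to the subgroup `H`:
`G` has order `mn`, `H` has order `n`, `R` is a `k`-subset of `G` whose internal
differences hit every element of `G∖H` exactly `lam` times and every non-identity
element of `H` exactly `0` times. -/
def IsRDS (G : Type*) [Group G] [Fintype G] [DecidableEq G] (H : Subgroup G) [Fintype H]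
    (m n k lam : ℕ) (R : Finset G) : Prop :=
  Fintype.card G = m * n ∧ Fintype.card H = n ∧ R.card = k ∧
  (∀ g : G, g ∉ H → (mulDInt R).count g = lam) ∧
  (∀ g : G, g ∈ H → g ≠ 1 → (mulDInt R).count g = 0)

/-- if `G` has order `mn`, `H` is a normal subgroup of order `n`, and
there exists an `(m, n, m−1, (m−2)/n)`-RDS in `G` relative to `H` (with `n ∣ m−2`),
then there is a family of subsets of `G` which is simultaneously an
`(mn, n, m−1, m−2, 0)`-DPDF and an `(mn, n, m−1, (m−2)(n−1), (m−1)n)`-EPDF in `G`,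
whose sets partition `G∖H`. -/
theorem rds_to_dpdf_epdf {G : Type*} [Group G] [Fintype G] [DecidableEq G]
    (H : Subgroup G) [H.Normal] [Fintype H] (m n : ℕ)
    (hG : Fintype.card G = m * n) (hH : Fintype.card H = n) (hdvd : n ∣ m - 2)
    (hex : ∃ R : Finset G, IsRDS G H m n (m - 1) ((m - 2) / n) R) :
    ∃ T : Fin n → Finset G,
      IsMulDPDF G (m * n) n (m - 1) (m - 2) 0 T ∧
      IsMulEPDF G (m * n) n (m - 1) ((m - 2) * (n - 1)) ((m - 1) * n) T ∧
      (∀ x : G, (∃ i, x ∈ T i) ↔ x ∉ H) := by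
  classical
  obtain ⟨R, hGc, hHc, hRcard, hRout, hRin⟩ := hex
  have hn : 0 < n := hH ▸ Fintype.card_pos
  have hm : 0 < m := by
    have h := Fintype.card_pos (α := G)
    rw [hG] at h
    exact Nat.pos_of_ne_zero fun hmz => by simp [hmz] at h
  haveI : Fintype (G ⧸ H) := Fintype.ofFinite _
  have hQcard : Fintype.card (G ⧸ H) = m := by
    have h := Subgroup.card_eq_card_quotient_mul_card_subgroup H
    rw [Nat.card_eq_fintype_card, Nat.card_eq_fintype_card, Nat.card_eq_fintype_card,
      hG, hH] at h
    exact Nat.eq_of_mul_eq_mul_right hn h.symm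
  set f : G → G ⧸ H := QuotientGroup.mk with hf
  have hmul : ∀ x y : G, f (x * y) = f x * f y := fun x y => rfl
  have hinv : ∀ x : G, f x⁻¹ = (f x)⁻¹ := fun x => rfl
  have hinj : ∀ x ∈ R, ∀ y ∈ R, f x = f y → x = y := by
    intro x hx y hy hxy
    by_contra hne
    have hmem : x⁻¹ * y ∈ H := QuotientGroup.eq.mp hxy
    have hconj := (inferInstance : H.Normal).conj_mem _ hmem x
    have hyx : y * x⁻¹ ∈ H := by
      rwa [show x * (x⁻¹ * y) * x⁻¹ = y * x⁻¹ by group] at hconj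
    have hne1 : y * x⁻¹ ≠ 1 := fun h => hne (mul_inv_eq_one.mp h).symm
    have hc0 := hRin (y * x⁻¹) hyx hne1
    rw [count_mulDInt] at hc0
    have hmem2 : ((y, x) : G × G) ∈ (R ×ˢ R).filter
        fun p => p.1 ≠ p.2 ∧ p.1 * p.2⁻¹ = y * x⁻¹ := by
      simp only [mem_filter, mem_product]
      refine ⟨⟨hy, hx⟩, fun h => hne h.symm, ?_⟩
      trivial
    have := Finset.card_pos.mpr ⟨_, hmem2⟩
    omega
  -- the image of R in the quotient
  set Rq : Finset (G ⧸ H) := R.image f with hRqdef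
  have hRqcard : Rq.card = m - 1 := by
    rw [hRqdef, Finset.card_image_of_injOn fun x hx y hy => hinj x hx y hy, hRcard]
  have hqex : ∃ q : G ⧸ H, q ∉ Rq := by
    by_contra hcon
    push_neg at hcon
    have : Rq = univ := Finset.eq_univ_of_forall hcon
    rw [this, Finset.card_univ, hQcard] at hRqcard
    omega
  obtain ⟨q, hqR⟩ := hqex
  have hRq : Rq = {q}ᶜ := by
    apply Finset.eq_of_subset_of_card_le
    · intro x hx
      simp only [Finset.mem_compl, Finset.mem_singleton]
      rintro rfl; exact hqR hx
    · rw [Finset.card_compl, Finset.card_singleton, hQcard, hRqcard]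
  set c : G := Quotient.out q with hcdef
  have hc : f c = q := QuotientGroup.out_eq' q
  set e : Fin n ≃ H := (Fintype.equivFinOfCardEq hH).symm with hedef
  set a : Fin n → G := fun i => c⁻¹ * ((e i : H) : G) with hadef
  set T : Fin n → Finset G := fun i => R.image (fun r => r * a i) with hTdef
  have hfe : ∀ i, f ((e i : H) : G) = 1 := fun i => (QuotientGroup.eq_one_iff _).mpr (e i).2
  have hfa : ∀ i, f (a i) = q⁻¹ := by
    intro i
    rw [hadef]
    show f (c⁻¹ * _) = q⁻¹
    rw [hmul, hinv, hfe, hc, mul_one]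
  have hTnotH : ∀ i, ∀ x ∈ T i, x ∉ H := by
    intro i x hx hxH
    obtain ⟨r, hr, rfl⟩ := Finset.mem_image.mp hx
    have h1 : f (r * a i) = 1 := (QuotientGroup.eq_one_iff _).mpr hxH
    rw [hmul, hfa] at h1
    have h2 : f r = q := by
      have := mul_eq_one_iff_eq_inv.mp h1
      rwa [inv_inv] at this
    exact hqR (h2 ▸ Finset.mem_image_of_mem f hr)
  have hcover : ∀ x : G, x ∉ H → ∃ i, x ∈ T i := by
    intro x hxH
    have hfx : f x ≠ 1 := fun h => hxH ((QuotientGroup.eq_one_iff x).mp h)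
    have hmem : f x * q ∈ Rq := by
      rw [hRq]
      simp only [Finset.mem_compl, Finset.mem_singleton]
      intro h
      exact hfx (by
        have : f x * q = 1 * q := by rw [h, one_mul]
        exact mul_right_cancel this)
    obtain ⟨r, hr, hrq⟩ := Finset.mem_image.mp hmem
    have hh : c * r⁻¹ * x ∈ H := by
      apply (QuotientGroup.eq_one_iff _).mp
      show f (c * r⁻¹ * x) = 1
      rw [hmul, hmul, hinv, hc, hrq]
      group
    refine ⟨e.symm ⟨c * r⁻¹ * x, hh⟩, Finset.mem_image.mpr ⟨r, hr, ?_⟩⟩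
    rw [hadef]
    show r * (c⁻¹ * ((e (e.symm ⟨c * r⁻¹ * x, hh⟩) : H) : G)) = x
    rw [Equiv.apply_symm_apply]
    show r * (c⁻¹ * (c * r⁻¹ * x)) = x
    group
  have hTdisj : ∀ i j, i ≠ j → Disjoint (T i) (T j) := by
    intro i j hij
    rw [Finset.disjoint_left]
    intro x hxi hxj
    obtain ⟨r, hr, hr'⟩ := Finset.mem_image.mp hxi
    obtain ⟨r', hr2, hr2'⟩ := Finset.mem_image.mp hxj
    have hfr : f r = f r' := by
      have h1 : f r * q⁻¹ = f x := by rw [← hr', hmul, hfa]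
      have h2 : f r' * q⁻¹ = f x := by rw [← hr2', hmul, hfa]
      have := h1.trans h2.symm
      exact mul_right_cancel this
    have hrr : r = r' := hinj r hr r' hr2 hfr
    have haij : a i = a j := by
      have := hr'.trans hr2'.symm
      rw [hrr] at this
      exact mul_left_cancel this
    have heij : (e i : H) = e j := by
      rw [hadef] at haij
      exact Subtype.ext (mul_left_cancel haij)
    exact hij (e.injective heij)
  have hT1 : ∀ i, (1 : G) ∉ T i := fun i h1 => hTnotH i 1 h1 H.one_mem
  have hTcard : ∀ i, (T i).card = m - 1 := by
    intro i
    rw [hTdef]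
    show (R.image (fun r => r * a i)).card = m - 1
    rw [Finset.card_image_of_injective _ (mul_left_injective (a i)), hRcard]
  -- internal difference counts
  have hIntT : ∀ i (g : G), (mulDInt (T i)).count g = (mulDInt R).count g := by
    intro i g
    rw [hTdef]
    exact count_mulDInt_image_mul_right R (a i) g
  have hIntFam : ∀ g : G, (MulIntFam T).count g = n * (mulDInt R).count g := by
    intro g
    rw [MulIntFam, Multiset.count_sum']
    rw [Finset.sum_congr rfl fun i _ => hIntT i g]
    rw [Finset.sum_const, Finset.card_univ, Fintype.card_fin, smul_eq_mul]
  have hInt_out : ∀ g ∉ H, (MulIntFam T).count g = m - 2 := by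
    intro g hg
    rw [hIntFam, hRout g hg, Nat.mul_div_cancel' hdvd]
  have hInt_in : ∀ g ∈ H, g ≠ 1 → (MulIntFam T).count g = 0 := by
    intro g hg hne
    rw [hIntFam, hRin g hg hne, mul_zero]
  -- the set S = G \ H
  set S : Finset G := univ.filter (fun x : G => x ∉ H) with hSdef
  have hSmem : ∀ x : G, x ∈ S ↔ x ∉ H := by
    intro x; rw [hSdef]; simp
  have hKcard : (univ.filter (fun x : G => x ∈ H)).card = n := by
    rw [← hH, ← Finset.card_univ]
    exact Finset.card_bij' (fun x hx => (⟨x, (Finset.mem_filter.mp hx).2⟩ : H))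
      (fun h _ => (h : G)) (fun x hx => Finset.mem_univ _)
      (fun h _ => Finset.mem_filter.mpr ⟨Finset.mem_univ _, h.2⟩)
      (fun x hx => rfl) (fun h _ => rfl)
  have hfilter_mul : ∀ g : G, (univ.filter (fun y : G => g * y ∈ H)).card = n := by
    intro g
    rw [← hKcard]
    apply Finset.card_nbij' (fun y => g * y) (fun z => g⁻¹ * z)
    · intro y hy; simp only [mem_coe, mem_filter, mem_univ, true_and] at hy ⊢; exact hy
    · intro z hz; simp only [mem_coe, mem_filter, mem_univ, true_and] at hz ⊢
      rwa [← mul_assoc, mul_inv_cancel, one_mul]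
    · intro y _; dsimp only; rw [← mul_assoc, inv_mul_cancel, one_mul]
    · intro z _; dsimp only; rw [← mul_assoc, mul_inv_cancel, one_mul]
  have hpaircount : ∀ g : G, ((S ×ˢ S).filter fun p => p.1 * p.2⁻¹ = g).card
      = (univ.filter fun y : G => y ∉ H ∧ g * y ∉ H).card := by
    intro g
    apply Finset.card_nbij' (fun p => p.2) (fun y => (g * y, y))
    · rintro ⟨x, y⟩ hp
      simp only [mem_coe, mem_filter, mem_product, mem_univ, true_and] at hp ⊢
      obtain ⟨⟨hx, hy⟩, hxy⟩ := hp
      refine ⟨(hSmem y).mp hy, ?_⟩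
      have : g * y = x := by rw [← hxy]; group
      rw [this]
      exact (hSmem x).mp hx
    · rintro y hy
      simp only [mem_coe, mem_filter, mem_univ, true_and] at hy
      simp only [mem_coe, mem_filter, mem_product]
      refine ⟨⟨(hSmem _).mpr hy.2, (hSmem _).mpr hy.1⟩, by group⟩
    · rintro ⟨x, y⟩ hp
      simp only [mem_coe, mem_filter, mem_product] at hp
      have : g * y = x := by rw [← hp.2]; group
      dsimp only; rw [this]
    · rintro y _; rfl
  have hbig_in : ∀ g ∈ H, ((S ×ˢ S).filter fun p => p.1 * p.2⁻¹ = g).card + n = m * n := by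
    intro g hg
    rw [hpaircount]
    have heq : (univ.filter fun y : G => y ∉ H ∧ g * y ∉ H)
        = univ.filter (fun y : G => ¬ y ∈ H) := by
      apply Finset.filter_congr
      intro y _
      constructor
      · rintro ⟨h1, _⟩; exact h1
      · intro h1; exact ⟨h1, fun h2 => h1 ((H.mul_mem_cancel_left hg).mp h2)⟩
    rw [heq]
    have h0 := Finset.card_filter_add_card_filter_not
      (s := (univ : Finset G)) (p := fun y : G => y ∈ H)
    rw [Finset.card_univ, hG, hKcard] at h0
    omega
  have hbig_out : ∀ g ∉ H, ((S ×ˢ S).filter fun p => p.1 * p.2⁻¹ = g).card + (n + n) = m * n := by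
    intro g hg
    rw [hpaircount]
    have h0 := Finset.card_filter_add_card_filter_not
      (s := (univ : Finset G)) (p := fun y : G => y ∉ H ∧ g * y ∉ H)
    have h1 : univ.filter (fun y : G => ¬(y ∉ H ∧ g * y ∉ H))
        = univ.filter (fun y : G => y ∈ H) ∪ univ.filter (fun y : G => g * y ∈ H) := by
      rw [← Finset.filter_or]
      apply Finset.filter_congr
      intro y _
      constructor
      · intro h; by_contra hcon; push_neg at hcon; exact h ⟨hcon.1, hcon.2⟩
      · rintro (h | h) hcon
        · exact hcon.1 h
        · exact hcon.2 h
    have h2 : Disjoint (univ.filter (fun y : G => y ∈ H)) (univ.filter (fun y : G => g * y ∈ H)) := by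
      rw [Finset.disjoint_left]
      intro y hy1 hy2
      simp only [mem_filter, mem_univ, true_and] at hy1 hy2
      apply hg
      have := H.mul_mem hy2 (H.inv_mem hy1)
      rwa [mul_assoc, mul_inv_cancel, mul_one] at this
    rw [h1, Finset.card_union_of_disjoint h2, hKcard, hfilter_mul,
      Finset.card_univ, hG] at h0
    exact h0
  -- splitting S ×ˢ S over the family
  have hsplit : ∀ g : G, ((S ×ˢ S).filter fun p => p.1 * p.2⁻¹ = g).card
      = ∑ i, ∑ j, ((T i ×ˢ T j).filter fun p => p.1 * p.2⁻¹ = g).card := by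
    intro g
    have hU : (S ×ˢ S).filter (fun p => p.1 * p.2⁻¹ = g)
        = (univ : Finset (Fin n × Fin n)).biUnion
          (fun ij => (T ij.1 ×ˢ T ij.2).filter fun p => p.1 * p.2⁻¹ = g) := by
      ext ⟨x, y⟩
      simp only [mem_filter, mem_product, mem_biUnion, mem_univ, true_and]
      constructor
      · rintro ⟨⟨hx, hy⟩, hxy⟩
        obtain ⟨i, hi⟩ := hcover x ((hSmem x).mp hx)
        obtain ⟨j, hj⟩ := hcover y ((hSmem y).mp hy)
        exact ⟨(i, j), ⟨hi, hj⟩, hxy⟩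
      · rintro ⟨⟨i, j⟩, ⟨hx, hy⟩, hxy⟩
        exact ⟨⟨(hSmem x).mpr (hTnotH i x hx), (hSmem y).mpr (hTnotH j y hy)⟩, hxy⟩
    rw [hU, Finset.card_biUnion, ← Finset.univ_product_univ, Finset.sum_product]
    intro ij _ kl _ hne
    rw [Function.onFun, Finset.disjoint_left]
    rintro ⟨x, y⟩ h1 h2
    simp only [mem_filter, mem_product] at h1 h2
    apply hne
    have e1 : ij.1 = kl.1 := by
      by_contra hne1
      exact Finset.disjoint_left.mp (hTdisj _ _ hne1) h1.1.1 h2.1.1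
    have e2 : ij.2 = kl.2 := by
      by_contra hne2
      exact Finset.disjoint_left.mp (hTdisj _ _ hne2) h1.1.2 h2.1.2
    exact Prod.ext e1 e2
  have hdiag : ∀ g : G, g ≠ 1 → ∀ i,
      ((T i ×ˢ T i).filter fun p => p.1 * p.2⁻¹ = g).card = (mulDInt (T i)).count g := by
    intro g hg i
    rw [count_mulDInt]
    congr 1
    apply Finset.filter_congr
    intro p _
    constructor
    · intro h
      refine ⟨fun he => hg ?_, h⟩
      rw [← h, he, mul_inv_cancel]
    · rintro ⟨_, h⟩; exact h
  have hExtcount : ∀ g : G, (MulExtFam T).count g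
      = ∑ i, ∑ j ∈ univ.erase i, ((T i ×ˢ T j).filter fun p => p.1 * p.2⁻¹ = g).card := by
    intro g
    rw [MulExtFam, Multiset.count_sum']
    refine Finset.sum_congr rfl fun i _ => ?_
    rw [Multiset.count_sum']
    exact Finset.sum_congr rfl fun j _ => count_mulDExt _ _ _
  have hkey : ∀ g : G, g ≠ 1 → (MulExtFam T).count g + (MulIntFam T).count g
      = ((S ×ˢ S).filter fun p => p.1 * p.2⁻¹ = g).card := by
    intro g hg
    rw [hsplit, hExtcount, MulIntFam, Multiset.count_sum', ← Finset.sum_add_distrib]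
    apply Finset.sum_congr rfl
    intro i _
    rw [← hdiag g hg i, add_comm]
    exact Finset.add_sum_erase univ
      (fun j => ((T i ×ˢ T j).filter fun p => p.1 * p.2⁻¹ = g).card) (Finset.mem_univ i)
  -- final counts for the external family
  have hExt_out : ∀ g : G, g ∉ H → (MulExtFam T).count g = (m - 2) * (n - 1) := by
    intro g hg
    have hg1 : g ≠ 1 := fun h => hg (h ▸ H.one_mem)
    have hm2 : 2 ≤ m := by
      have hKlt : (univ.filter (fun x : G => x ∈ H)).card < Fintype.card G := by
        apply Finset.card_lt_card
        rw [Finset.ssubset_univ_iff]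
        intro hcon
        have hgmem : g ∈ univ.filter (fun x : G => x ∈ H) := by
          rw [hcon]; exact Finset.mem_univ g
        exact hg (Finset.mem_filter.mp hgmem).2
      rw [hKcard, hG] at hKlt
      have : 1 * n < m * n := by rwa [one_mul]
      exact Nat.lt_of_mul_lt_mul_right this
    have h1 := hkey g hg1
    rw [hInt_out g hg] at h1
    have h2 := hbig_out g hg
    rw [← h1] at h2
    -- h2 : Ext + (m-2) + (n + n) = m * n
    have h3 : (m - 2) * (n - 1) + (m - 2) + (n + n) = m * n := by
      obtain ⟨a', rfl⟩ : ∃ a', m = a' + 2 := ⟨m - 2, by omega⟩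
      obtain ⟨b', rfl⟩ : ∃ b', n = b' + 1 := ⟨n - 1, by omega⟩
      simp only [Nat.add_sub_cancel]
      ring
    rw [← h3] at h2
    omega
  have hExt_in : ∀ g : G, g ∈ H → g ≠ 1 → (MulExtFam T).count g = (m - 1) * n := by
    intro g hg hg1
    have h1 := hkey g hg1
    rw [hInt_in g hg hg1, Nat.add_zero] at h1
    have h2 := hbig_in g hg
    rw [← h1] at h2
    have h3 : (m - 1) * n + n = m * n := by
      obtain ⟨a', rfl⟩ : ∃ a', m = a' + 1 := ⟨m - 1, by omega⟩
      simp only [Nat.add_sub_cancel]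
      ring
    rw [← h3] at h2
    omega
  refine ⟨T, ⟨hG, Fintype.card_fin n, hTcard, hT1, hTdisj, ?_, ?_⟩,
    ⟨hG, Fintype.card_fin n, hTcard, hT1, hTdisj, ?_, ?_⟩,
    fun x => ⟨fun ⟨i, hi⟩ => hTnotH i x hi, hcover x⟩⟩
  · rintro g hg ⟨i, hi⟩
    exact hInt_out g (hTnotH i g hi)
  · intro g hg hnot
    have hgH : g ∈ H := by
      by_contra hcon
      obtain ⟨i, hi⟩ := hcover g hcon
      exact hnot i hi
    exact hInt_in g hgH hg
  · rintro g hg ⟨i, hi⟩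
    exact hExt_out g (hTnotH i g hi)
  · intro g hg hnot
    have hgH : g ∈ H := by
      by_contra hcon
      obtain ⟨i, hi⟩ := hcover g hcon
      exact hnot i hi
    exact hExt_in g hgH hg
end

section
/- Let n be a natural number with n ≥ 2, let m = (n−1)² + 1, let G be a finite group of order mn (written multiplicatively), and let H be a normal subgroup of G of order n. Suppose D is an (mn, (n−1)²+n, n)-difference set in G with H ⊆ D. Then R = D∖H is an (m, n, (n−1)², n−2)-RDS in G relative to H. -/
open Finset

section Aux
variable {G : Type*} [Group G] [DecidableEq G]

lemma count_mulDInt_pairs (A : Finset G) (g : G) :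
    (mulDInt A).count g
      = ((A ×ˢ A).filter fun p => p.1 ≠ p.2 ∧ p.1 * p.2⁻¹ = g).card := by
  classical
  unfold mulDInt
  rw [Multiset.count_map, ← Finset.filter_val, ← Finset.card_def, Finset.filter_filter]
  congr 1
  apply Finset.filter_congr
  intro p _
  simp [eq_comm]

lemma count_mulDInt_ne_one (A : Finset G) (g : G) (hg : g ≠ 1) :
    (mulDInt A).count g = (A.filter fun y => g * y ∈ A).card := by
  classical
  rw [count_mulDInt_pairs]
  apply Finset.card_bij (fun p _ => p.2)
  · intro p hp
    simp only [Finset.mem_filter, Finset.mem_product] at hp ⊢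
    obtain ⟨⟨h1, h2⟩, _, heq⟩ := hp
    rw [mul_inv_eq_iff_eq_mul] at heq
    rw [heq] at h1
    exact ⟨h2, h1⟩
  · intro p hp q hq h
    simp only [Finset.mem_filter, Finset.mem_product] at hp hq
    have h1 := hp.2.2; have h2 := hq.2.2
    rw [mul_inv_eq_iff_eq_mul] at h1 h2
    ext
    · rw [h1, h2, h]
    · exact h
  · intro y hy
    simp only [Finset.mem_filter] at hy
    refine ⟨(g * y, y), ?_, rfl⟩
    simp only [Finset.mem_filter, Finset.mem_product]
    refine ⟨⟨hy.2, hy.1⟩, ?_, by group⟩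
    intro h
    exact hg (mul_right_cancel (by rw [h, one_mul] : g * y = 1 * y))

end Aux

/-- let `n ≥ 2`, `m = (n−1)² + 1`, `G` a group of order `mn`, `H` a
normal subgroup of order `n`, and `D` an `(mn, (n−1)²+n, n)`-difference set in `G`
containing `H`.  Then `R = D∖H` is an `(m, n, (n−1)², n−2)`-RDS in `G` relative to `H`. -/
theorem diffset_minus_subgroup_rds {G : Type*} [Group G] [Fintype G] [DecidableEq G]
    (H : Subgroup G) [H.Normal] [Fintype H] (n : ℕ) (hn : 2 ≤ n)
    (hG : Fintype.card G = ((n - 1) ^ 2 + 1) * n) (hH : Fintype.card H = n)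
    (D : Finset G) (hDcard : D.card = (n - 1) ^ 2 + n)
    (hDS : ∀ g : G, g ≠ 1 → (mulDInt D).count g = n)
    (hHD : ∀ x : G, x ∈ H → x ∈ D)
    (R : Finset G) (hR : ∀ x : G, x ∈ R ↔ (x ∈ D ∧ x ∉ H)) :
    IsRDS G H ((n - 1) ^ 2 + 1) n ((n - 1) ^ 2) (n - 2) R := by
    classical
  obtain ⟨k, rfl⟩ : ∃ k, n = k + 2 := ⟨n - 2, by omega⟩
  have e1 : k + 2 - 1 = k + 1 := rfl
  have e2 : k + 2 - 2 = k := rfl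
  rw [e1] at hG hDcard
  rw [e1, e2]
  have hNormal : H.Normal := inferInstance
  -- the subgroup as a finset
  set Hf : Finset G := D.filter (fun x => x ∈ H) with hHfdef
  have memHf : ∀ x : G, x ∈ Hf ↔ x ∈ H := by
    intro x
    simp only [hHfdef, Finset.mem_filter]
    exact ⟨fun h => h.2, fun h => ⟨hHD x h, h⟩⟩
  have hHfuniv : Hf = Finset.univ.filter (fun x => x ∈ H) := by
    ext x; simp [memHf x]
  have hHfcard : Hf.card = k + 2 := by
    rw [hHfuniv, ← hH]
    exact (Fintype.card_of_subtype _ (fun x => by simp)).symm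
  -- quotient setup
  haveI : Fintype (G ⧸ H) := Fintype.ofFinite _
  have hQcard : Fintype.card (G ⧸ H) = (k + 1) ^ 2 + 1 := by
    have h1 := Subgroup.card_eq_card_quotient_mul_card_subgroup H
    rw [Nat.card_eq_fintype_card, Nat.card_eq_fintype_card, Nat.card_eq_fintype_card,
      hG, hH] at h1
    exact (Nat.eq_of_mul_eq_mul_right (by omega) h1.symm)
  have hmk : ∀ a b : G, (QuotientGroup.mk a : G ⧸ H) = QuotientGroup.mk b ↔ a * b⁻¹ ∈ H := by
    intro a b
    rw [QuotientGroup.eq]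
    constructor
    · intro h
      have h2 := hNormal.mem_comm h
      have h3 := H.inv_mem h2
      simpa using h3
    · intro h
      have h2 := hNormal.mem_comm h
      have h3 := H.inv_mem h2
      simpa using h3
  -- the coset-fiber counting function
  have hSum1 : ∑ q : G ⧸ H,
      (D.filter fun x => (QuotientGroup.mk x : G ⧸ H) = q).card = (k + 1) ^ 2 + (k + 2) := by
    rw [← hDcard]
    exact (Finset.card_eq_sum_card_fiberwise (fun x _ => Finset.mem_univ _)).symm
  have hd1 : (D.filter fun x => (QuotientGroup.mk x : G ⧸ H) = 1).card = k + 2 := by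
    have : (D.filter fun x => (QuotientGroup.mk x : G ⧸ H) = 1) = Hf := by
      ext x
      simp only [Finset.mem_filter, memHf x, QuotientGroup.eq_one_iff]
      try exact ⟨fun h => h.2, fun h => ⟨hHD x h, h⟩⟩
    rw [this, hHfcard]
  -- the sum of squares
  have hSum2 : ∑ q : G ⧸ H,
      (D.filter fun x => (QuotientGroup.mk x : G ⧸ H) = q).card
        * (D.filter fun x => (QuotientGroup.mk x : G ⧸ H) = q).card
      = ((k + 1) ^ 2 + (k + 2)) + (k + 1) * (k + 2) := by
    have hT : ((D ×ˢ D).filter fun p : G × G =>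
        (QuotientGroup.mk p.1 : G ⧸ H) = QuotientGroup.mk p.2).card
        = ∑ q : G ⧸ H,
          (D.filter fun x => (QuotientGroup.mk x : G ⧸ H) = q).card
            * (D.filter fun x => (QuotientGroup.mk x : G ⧸ H) = q).card := by
      rw [Finset.card_eq_sum_card_fiberwise
        (f := fun p : G × G => (QuotientGroup.mk p.1 : G ⧸ H)) (t := Finset.univ)
        (fun x _ => Finset.mem_univ _)]
      refine Finset.sum_congr rfl fun q _ => ?_
      rw [← Finset.card_product]
      congr 1
      ext p
      simp only [Finset.mem_filter, Finset.mem_product]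
      constructor
      · rintro ⟨⟨⟨h1, h2⟩, h3⟩, h4⟩
        exact ⟨⟨h1, h4⟩, h2, h3 ▸ h4⟩
      · rintro ⟨⟨h1, h4⟩, h2, h5⟩
        exact ⟨⟨⟨h1, h2⟩, h4.trans h5.symm⟩, h4⟩
    have hsplit := Finset.card_filter_add_card_filter_not
      (s := (D ×ˢ D).filter fun p : G × G =>
        (QuotientGroup.mk p.1 : G ⧸ H) = QuotientGroup.mk p.2) (p := fun p => p.1 = p.2)
    have hdiag : (((D ×ˢ D).filter fun p : G × G =>
        (QuotientGroup.mk p.1 : G ⧸ H) = QuotientGroup.mk p.2).filter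
          fun p => p.1 = p.2).card = (k + 1) ^ 2 + (k + 2) := by
      rw [← hDcard]
      symm
      apply Finset.card_bij (fun x _ => ((x, x) : G × G))
      · intro x hx
        simp [Finset.mem_filter, Finset.mem_product, hx]
      · intro a _ b _ h
        exact congrArg Prod.fst h
      · intro p hp
        simp only [Finset.mem_filter, Finset.mem_product] at hp
        exact ⟨p.1, hp.1.1.1, by ext <;> simp [hp.2]⟩
    have hoff : (((D ×ˢ D).filter fun p : G × G =>
        (QuotientGroup.mk p.1 : G ⧸ H) = QuotientGroup.mk p.2).filter
          fun p => ¬p.1 = p.2).card = (k + 1) * (k + 2) := by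
      rw [Finset.filter_filter]
      rw [Finset.card_eq_sum_card_fiberwise
        (f := fun p : G × G => p.1 * p.2⁻¹) (t := Hf.erase 1) ?_]
      · rw [Finset.sum_congr rfl (g := fun _ => k + 2) ?_]
        · rw [Finset.sum_const, Finset.card_erase_of_mem ((memHf 1).mpr H.one_mem),
            hHfcard, smul_eq_mul, e1]
        · intro h hh
          rw [Finset.mem_erase, memHf h] at hh
          rw [Finset.filter_filter]
          have : ((D ×ˢ D).filter fun p : G × G =>
              ((QuotientGroup.mk p.1 : G ⧸ H) = QuotientGroup.mk p.2 ∧ ¬p.1 = p.2)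
                ∧ p.1 * p.2⁻¹ = h)
              = ((D ×ˢ D).filter fun p : G × G => p.1 ≠ p.2 ∧ p.1 * p.2⁻¹ = h) := by
            ext p
            simp only [Finset.mem_filter, Finset.mem_product]
            constructor
            · rintro ⟨hp, ⟨_, h2⟩, h3⟩
              exact ⟨hp, h2, h3⟩
            · rintro ⟨hp, h2, h3⟩
              exact ⟨hp, ⟨(hmk p.1 p.2).mpr (h3 ▸ hh.2), h2⟩, h3⟩
          rw [this, ← count_mulDInt_pairs, hDS h hh.1]
      · intro p hp
        simp only [Finset.mem_coe, Finset.mem_filter, Finset.mem_product] at hp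
        rw [Finset.mem_coe, Finset.mem_erase, memHf]
        refine ⟨fun hcon => hp.2.2 ?_, (hmk p.1 p.2).mp hp.2.1⟩
        rwa [mul_inv_eq_one] at hcon
    rw [← hT, ← hsplit, hdiag, hoff]
  -- key: every nontrivial coset meets D in exactly one element
  have hkey : ∀ q : G ⧸ H, q ≠ 1 →
      (D.filter fun x => (QuotientGroup.mk x : G ⧸ H) = q).card = 1 := by
    set f : G ⧸ H → ℕ := fun q => (D.filter fun x => (QuotientGroup.mk x : G ⧸ H) = q).card
      with hfdef
    have hcard_erase : (Finset.univ.erase (1 : G ⧸ H)).card = (k + 1) ^ 2 := by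
      rw [Finset.card_erase_of_mem (Finset.mem_univ _), Finset.card_univ, hQcard,
        Nat.add_sub_cancel]
    have hsum_erase : ∑ q ∈ Finset.univ.erase (1 : G ⧸ H), f q = (k + 1) ^ 2 := by
      have h := Finset.add_sum_erase Finset.univ f (Finset.mem_univ (1 : G ⧸ H))
      rw [hSum1] at h
      have hf1 : f 1 = k + 2 := hd1
      rw [hf1] at h
      linarith
    have hsum2_erase : ∑ q ∈ Finset.univ.erase (1 : G ⧸ H), f q * f q = (k + 1) ^ 2 := by
      have h := Finset.add_sum_erase Finset.univ (fun q => f q * f q)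
        (Finset.mem_univ (1 : G ⧸ H))
      rw [hSum2] at h
      have hf1 : f 1 = k + 2 := hd1
      simp only [hf1] at h
      have e : (k + 2) + (k + 1) * (k + 2) = (k + 2) * (k + 2) := by ring
      linarith
    have hle : ∀ q ∈ Finset.univ.erase (1 : G ⧸ H), f q ≤ f q * f q := by
      intro q _
      rcases Nat.eq_zero_or_pos (f q) with h | h
      · rw [h]
      · exact Nat.le_mul_of_pos_left _ h
    have heach : ∀ q ∈ Finset.univ.erase (1 : G ⧸ H), f q = f q * f q :=
      (Finset.sum_eq_sum_iff_of_le hle).mp (hsum_erase.trans hsum2_erase.symm)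
    have hle1 : ∀ q ∈ Finset.univ.erase (1 : G ⧸ H), f q ≤ 1 := by
      intro q hq
      have h := heach q hq
      rcases Nat.lt_or_ge (f q) 2 with h2 | h2
      · omega
      · have h3 : 2 * f q ≤ f q * f q := Nat.mul_le_mul_right _ h2
        linarith
    intro q hq
    show f q = 1
    have hqmem : q ∈ Finset.univ.erase (1 : G ⧸ H) :=
      Finset.mem_erase.mpr ⟨hq, Finset.mem_univ _⟩
    by_contra hne
    have hq0 : f q = 0 := by have := hle1 q hqmem; omega
    have hlt : ∑ x ∈ Finset.univ.erase (1 : G ⧸ H), f x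
        < ∑ _x ∈ Finset.univ.erase (1 : G ⧸ H), 1 :=
      Finset.sum_lt_sum hle1 ⟨q, hqmem, by omega⟩
    rw [Finset.sum_const, smul_eq_mul, mul_one, hcard_erase, hsum_erase] at hlt
    exact lt_irrefl _ hlt
  -- basic set relations
  have hunion : Hf ∪ R = D := by
    ext x
    simp only [Finset.mem_union, memHf x, hR x]
    constructor
    · rintro (h | h)
      · exact hHD x h
      · exact h.1
    · intro h
      by_cases hx : x ∈ H
      · exact Or.inl hx
      · exact Or.inr ⟨h, hx⟩
  have hdisj : Disjoint Hf R := by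
    rw [Finset.disjoint_left]
    intro x hx hxR
    exact ((hR x).mp hxR).2 ((memHf x).mp hx)
  have hRcard : R.card = (k + 1) ^ 2 := by
    have hReq : R = D \ Hf := by
      ext x
      simp only [Finset.mem_sdiff, hR x, memHf x]
    rw [hReq, Finset.card_sdiff_of_subset (fun x hx => (Finset.mem_filter.mp hx).1), hDcard, hHfcard]
    omega
  have hDfilter : ∀ g : G, (D.filter fun y => g * y ∈ D).card
      = (Hf.filter fun y => g * y ∈ D).card + (R.filter fun y => g * y ∈ D).card := by
    intro g
    rw [← Finset.card_union_of_disjoint (Finset.disjoint_filter_filter hdisj),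
      ← Finset.filter_union, hunion]
  have hRfilter : ∀ g : G, (R.filter fun y => g * y ∈ D).card
      = (R.filter fun y => g * y ∈ R).card + (R.filter fun y => g * y ∈ Hf).card := by
    intro g
    rw [← Finset.card_union_of_disjoint ?_]
    · congr 1
      ext y
      simp only [Finset.mem_filter, Finset.mem_union, ← hunion]
      tauto
    · rw [Finset.disjoint_left]
      intro y h1 h2
      simp only [Finset.mem_filter] at h1 h2
      exact (Finset.disjoint_left.mp hdisj) h2.2 h1.2
  have hcoset : ∀ g : G, g ∉ H →
      (D.filter fun x => (QuotientGroup.mk x : G ⧸ H) = QuotientGroup.mk g).card = 1 := by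
    intro g hg
    exact hkey _ (fun h => hg ((QuotientGroup.eq_one_iff g).mp h))
  have htermA : ∀ g : G, g ∉ H → (Hf.filter fun y => g * y ∈ D).card = 1 := by
    intro g hg
    rw [← hcoset g hg]
    apply Finset.card_bij (fun y _ => g * y)
    · intro y hy
      simp only [Finset.mem_filter] at hy ⊢
      refine ⟨hy.2, (hmk _ _).mpr ?_⟩
      have hyH : y ∈ H := (memHf y).mp hy.1
      have := hNormal.conj_mem y hyH g
      simpa [mul_assoc] using this
    · intro a _ b _ h
      exact mul_left_cancel h
    · intro x hx
      simp only [Finset.mem_filter] at hx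
      have hmem : x * g⁻¹ ∈ H := (hmk x g).mp hx.2
      have hginvx : g⁻¹ * x ∈ H := hNormal.mem_comm hmem
      refine ⟨g⁻¹ * x, ?_, by simp⟩
      simp only [Finset.mem_filter, memHf]
      exact ⟨hginvx, by simpa using hx.1⟩
  have htermC : ∀ g : G, g ∉ H → (R.filter fun y => g * y ∈ Hf).card = 1 := by
    intro g hg
    have hginv : g⁻¹ ∉ H := fun h => hg (by simpa using H.inv_mem h)
    rw [← hcoset g⁻¹ hginv]
    congr 1
    ext y
    simp only [Finset.mem_filter, hR y, memHf (g * y)]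
    constructor
    · rintro ⟨⟨hyD, _⟩, hgy⟩
      refine ⟨hyD, (hmk y g⁻¹).mpr ?_⟩
      simpa using hNormal.mem_comm hgy
    · rintro ⟨hyD, hmkeq⟩
      have hyg : y * g ∈ H := by simpa using (hmk y g⁻¹).mp hmkeq
      have hgy : g * y ∈ H := hNormal.mem_comm hyg
      refine ⟨⟨hyD, fun hyH => hg ?_⟩, hgy⟩
      have := H.mul_mem hgy (H.inv_mem hyH)
      simpa [mul_assoc] using this
  -- count for g outside H
  have hcount_notH : ∀ g : G, g ∉ H → (mulDInt R).count g = k := by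
    intro g hg
    have hg1 : g ≠ 1 := fun h => hg (h ▸ H.one_mem)
    have hD := hDS g hg1
    rw [count_mulDInt_ne_one D g hg1, hDfilter g, hRfilter g, htermA g hg,
      htermC g hg] at hD
    rw [count_mulDInt_ne_one R g hg1]
    omega
  -- count for g inside H
  have hcount_H : ∀ g : G, g ∈ H → g ≠ 1 → (mulDInt R).count g = 0 := by
    intro g hgH hg1
    have hD := hDS g hg1
    rw [count_mulDInt_ne_one D g hg1, hDfilter g, hRfilter g] at hD
    have h1 : (Hf.filter fun y => g * y ∈ D).card = k + 2 := by
      rw [← hHfcard]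
      congr 1
      apply Finset.filter_true_of_mem
      intro y hy
      exact hHD _ (H.mul_mem hgH ((memHf y).mp hy))
    have h2 : (R.filter fun y => g * y ∈ Hf).card = 0 := by
      rw [Finset.card_eq_zero, Finset.filter_eq_empty_iff]
      intro y hy hcon
      have hyH : y ∈ H := by
        have := H.mul_mem (H.inv_mem hgH) ((memHf _).mp hcon)
        simpa [mul_assoc] using this
      exact ((hR y).mp hy).2 hyH
    rw [h1, h2] at hD
    rw [count_mulDInt_ne_one R g hg1]
    omega
  exact ⟨hG, hH, hRcard, hcount_notH, hcount_H⟩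
end

section
/- Let t > 2 be an integer and let G = ℤ_{2t+1}. The family S′ of the t−1 sets {2,3}, {4,5}, …, {2t−2, 2t−1} is a (2t+1, t−1, 2, 0, t−1)-DPDF in G, and there exist no integers λ, μ for which S′ is a (2t+1, t−1, 2, λ, μ)-EPDF in G. -/
/-!
A set `{x, x + 1}` has internal differences `-1` and `1` only, so `Int(S′) = (t - 1) • {-1, 1}`.
The union `S` of the family is `{2, …, 2t - 1}`, whose nonzero complement is exactly `{1, -1}`;
hence `S′` is a DPDF with `λ = 0` and `μ = t - 1`.

Since the sets partition `S`, every nonzero `g` satisfies `Δ(S) = Int(S′) + Ext(S′)` at `g`.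
For `g = 2, 3 ∈ S` the internal count vanishes, while in the interval `S` the difference `c ≤ 3`
occurs `2t - c - 2` times. So `Ext(S′)` takes the two values `2t - 4 ≠ 2t - 5` on `S`.
-/

open Finset

/-- The multiset of internal differences of a finite subset of an additive group. -/
def dInt {G : Type*} [AddGroup G] [DecidableEq G] (D : Finset G) : Multiset G :=
  ((D ×ˢ D).filter fun p => p.1 ≠ p.2).val.map fun p => p.1 - p.2

/-- The multiset of external differences between two finite subsets of an additive group. -/
def dExt {G : Type*} [AddGroup G] (D₁ D₂ : Finset G) : Multiset G :=
  (D₁ ×ˢ D₂).val.map fun p => p.1 - p.2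

/-- The multiset union of the internal differences of a family of sets. -/
def IntFam {G : Type*} [AddGroup G] [DecidableEq G] {ι : Type*} [Fintype ι]
    (A : ι → Finset G) : Multiset G :=
  ∑ i, dInt (A i)

/-- The multiset union of external differences over ordered pairs of distinct sets. -/
def ExtFam {G : Type*} [AddGroup G] [DecidableEq G] {ι : Type*} [Fintype ι] [DecidableEq ι]
    (A : ι → Finset G) : Multiset G :=
  ∑ i, ∑ j ∈ Finset.univ.erase i, dExt (A i) (A j)

/-- A `(v,s,k,lam,mu)`-disjoint partial difference family in the additive group `G`. -/
def IsDPDF (G : Type*) [AddGroup G] [Fintype G] [DecidableEq G] {ι : Type*} [Fintype ι]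
    (v s k lam mu : ℕ) (A : ι → Finset G) : Prop :=
  Fintype.card G = v ∧ Fintype.card ι = s ∧
  (∀ i, (A i).card = k) ∧ (∀ i, (0 : G) ∉ A i) ∧
  (∀ i j, i ≠ j → Disjoint (A i) (A j)) ∧
  (∀ g : G, g ≠ 0 → (∃ i, g ∈ A i) → (IntFam A).count g = lam) ∧
  (∀ g : G, g ≠ 0 → (∀ i, g ∉ A i) → (IntFam A).count g = mu)

/-- A `(v,s,k,lam,mu)`-external partial difference family in the additive group `G`. -/
def IsEPDF (G : Type*) [AddGroup G] [Fintype G] [DecidableEq G] {ι : Type*} [Fintype ι]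
    [DecidableEq ι] (v s k lam mu : ℕ) (A : ι → Finset G) : Prop :=
  Fintype.card G = v ∧ Fintype.card ι = s ∧
  (∀ i, (A i).card = k) ∧ (∀ i, (0 : G) ∉ A i) ∧
  (∀ i j, i ≠ j → Disjoint (A i) (A j)) ∧
  (∀ g : G, g ≠ 0 → (∃ i, g ∈ A i) → (ExtFam A).count g = lam) ∧
  (∀ g : G, g ≠ 0 → (∀ i, g ∉ A i) → (ExtFam A).count g = mu)

open Function

section Differences

variable {G : Type*} [AddGroup G]

lemma dExt_eq_sum (D₁ D₂ : Finset G) : dExt D₁ D₂ = ∑ x ∈ D₁, ∑ y ∈ D₂, {x - y} := by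
  rw [← Finset.sum_product' (f := fun x y => ({x - y} : Multiset G)), Finset.sum_eq_multiset_sum,
    dExt, ← Multiset.sum_map_singleton (Multiset.map _ _), Multiset.map_map]
  rfl

variable [DecidableEq G]

lemma count_dExt (D₁ D₂ : Finset G) (g : G) :
    (dExt D₁ D₂).count g = #{y ∈ D₂ | g + y ∈ D₁} := by
  simp only [dExt_eq_sum, Multiset.count_sum', Multiset.count_singleton, eq_sub_iff_add_eq]
  rw [Finset.sum_comm, Finset.card_filter]
  refine Finset.sum_congr rfl fun y _ => ?_
  simp [eq_comm]

lemma count_dInt_of_ne_zero (D : Finset G) {g : G} (hg : g ≠ 0) :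
    (dInt D).count g = (dExt D D).count g := by
  rw [dInt, dExt, Finset.filter_val, Multiset.count_map, Multiset.count_map, Multiset.filter_filter]
  congr 1
  refine Multiset.filter_congr fun p _ => and_iff_left_of_imp fun h he => hg ?_
  rw [h, he, sub_self]

lemma dInt_pair {a b : G} (h : a ≠ b) : dInt {a, b} = {a - b, b - a} := by
  simp [dInt, h, h.symm, Multiset.filter_singleton]

variable {ι : Type*} [Fintype ι] [DecidableEq ι]

lemma dExt_biUnion_self {A : ι → Finset G} (hA : Pairwise (Disjoint on A)) :
    dExt (univ.biUnion A) (univ.biUnion A) = ∑ i, dExt (A i) (A i) + ExtFam A := by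
  have hA' : ((univ : Finset ι) : Set ι).PairwiseDisjoint A := hA.set_pairwise _
  simp only [dExt_eq_sum (univ.biUnion A), Finset.sum_biUnion hA']
  rw [ExtFam, ← Finset.sum_add_distrib]
  refine Finset.sum_congr rfl fun i _ => ?_
  rw [Finset.sum_comm, Finset.add_sum_erase _ (fun j => dExt (A i) (A j)) (mem_univ i)]
  simp only [dExt_eq_sum]

lemma count_dInt_biUnion {A : ι → Finset G} (hA : Pairwise (Disjoint on A)) {g : G}
    (hg : g ≠ 0) :
    (dInt (univ.biUnion A)).count g = (IntFam A).count g + (ExtFam A).count g := by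
  rw [count_dInt_of_ne_zero _ hg, dExt_biUnion_self hA, Multiset.count_add, IntFam,
    Multiset.count_sum', Multiset.count_sum']
  simp only [count_dInt_of_ne_zero _ hg]

end Differences

namespace ZMod

lemma eq_natCast_iff_val_eq {n m : ℕ} [NeZero n] (x : ZMod n) (hm : m < n) :
    x = m ↔ x.val = m := by
  constructor
  · rintro rfl
    exact val_natCast_of_lt hm
  · rintro rfl
    exact (natCast_zmod_val x).symm

lemma natCast_ne_zero_of_lt {n c : ℕ} (hc₀ : 0 < c) (hc : c < n) : (c : ZMod n) ≠ 0 := by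
  rw [Ne, ← val_eq_zero, val_natCast_of_lt hc]
  exact hc₀.ne'

lemma card_filter_val_mem {n : ℕ} [NeZero n] {s : Finset ℕ} (hs : ∀ k ∈ s, k < n) :
    #{x : ZMod n | x.val ∈ s} = #s := by
  refine Finset.card_nbij' val (fun k => (k : ZMod n)) ?_ ?_ ?_ ?_
  · intro x hx
    simpa using hx
  · intro k hk
    simpa [val_natCast_of_lt (hs k hk)] using hk
  · intro x _
    simp
  · intro k hk
    exact val_natCast_of_lt (hs k hk)

end ZMod

def consecutivePairs (t : ℕ) (i : Fin (t - 1)) : Finset (ZMod (2 * t + 1)) :=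
  {((2 * (i : ℕ) + 2 : ℕ) : ZMod (2 * t + 1)), ((2 * (i : ℕ) + 3 : ℕ) : ZMod (2 * t + 1))}

section ConsecutivePairs

variable {t : ℕ}

lemma mem_consecutivePairs {i : Fin (t - 1)} {x : ZMod (2 * t + 1)} :
    x ∈ consecutivePairs t i ↔ x.val / 2 = i + 1 := by
  have hi := i.isLt
  rw [consecutivePairs, mem_insert, mem_singleton, ZMod.eq_natCast_iff_val_eq _ (by omega),
    ZMod.eq_natCast_iff_val_eq _ (by omega)]
  omega

lemma exists_mem_consecutivePairs_iff {x : ZMod (2 * t + 1)} :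
    (∃ i, x ∈ consecutivePairs t i) ↔ 2 ≤ x.val ∧ x.val < 2 * t := by
  simp only [mem_consecutivePairs]
  constructor
  · rintro ⟨i, hi⟩
    have := i.isLt
    omega
  · rintro ⟨h₁, h₂⟩
    exact ⟨⟨x.val / 2 - 1, by omega⟩, by simp only; omega⟩

lemma exists_natCast_mem_consecutivePairs {c : ℕ} (hc₂ : 2 ≤ c) (hc : c < 2 * t) :
    ∃ i, (c : ZMod (2 * t + 1)) ∈ consecutivePairs t i := by
  rw [exists_mem_consecutivePairs_iff, ZMod.val_natCast_of_lt (by omega)]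
  exact ⟨hc₂, hc⟩

lemma zero_notMem_consecutivePairs (i : Fin (t - 1)) :
    (0 : ZMod (2 * t + 1)) ∉ consecutivePairs t i := by
  simp [mem_consecutivePairs]

lemma pairwise_disjoint_consecutivePairs : Pairwise (Disjoint on consecutivePairs t) := by
  intro i j hij
  refine Finset.disjoint_left.2 fun x hi hj => hij (Fin.ext ?_)
  rw [mem_consecutivePairs] at hi hj
  omega

lemma biUnion_consecutivePairs :
    univ.biUnion (consecutivePairs t) =
      ({x | 2 ≤ x.val ∧ x.val < 2 * t} : Finset (ZMod (2 * t + 1))) := by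
  ext x
  simp [exists_mem_consecutivePairs_iff]

lemma natCast_ne_natCast_succ (i : Fin (t - 1)) :
    ((2 * (i : ℕ) + 2 : ℕ) : ZMod (2 * t + 1)) ≠ ((2 * (i : ℕ) + 3 : ℕ) : ZMod (2 * t + 1)) := by
  have hi := i.isLt
  rw [Ne, ZMod.eq_natCast_iff_val_eq _ (by omega), ZMod.val_natCast_of_lt (by omega)]
  omega

lemma card_consecutivePairs (i : Fin (t - 1)) : #(consecutivePairs t i) = 2 :=
  Finset.card_pair (natCast_ne_natCast_succ i)

lemma intFam_consecutivePairs : IntFam (consecutivePairs t) = (t - 1) • {-1, 1} := by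
  have hpair : ∀ i : Fin (t - 1), dInt (consecutivePairs t i) = {-1, 1} := by
    intro i
    have hsucc : ((2 * (i : ℕ) + 3 : ℕ) : ZMod (2 * t + 1)) =
        ((2 * (i : ℕ) + 2 : ℕ) : ZMod (2 * t + 1)) + 1 := by
      push_cast
      ring
    rw [consecutivePairs, dInt_pair (natCast_ne_natCast_succ i), hsucc, sub_add_cancel_left,
      add_sub_cancel_left]
  simp [IntFam, hpair]

lemma isDPDF_consecutivePairs (ht : 0 < t) :
    IsDPDF (ZMod (2 * t + 1)) (2 * t + 1) (t - 1) 2 0 (t - 1) (consecutivePairs t) := by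
  have : Fact (1 < 2 * t + 1) := ⟨by omega⟩
  have hval_neg_one : (-1 : ZMod (2 * t + 1)).val = 2 * t := ZMod.val_neg_one _
  have hval_one : (1 : ZMod (2 * t + 1)).val = 1 := ZMod.val_one _
  refine ⟨ZMod.card _, Fintype.card_fin _, card_consecutivePairs, zero_notMem_consecutivePairs,
    fun i j h => pairwise_disjoint_consecutivePairs h, fun g _ hS => ?_, fun g hg hS => ?_⟩
  · rw [exists_mem_consecutivePairs_iff] at hS
    have h₁ : g ≠ -1 := by rintro rfl; omega
    have h₂ : g ≠ 1 := by rintro rfl; omega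
    simp [intFam_consecutivePairs, h₁, h₂]
  · have hS' : ¬ (2 ≤ g.val ∧ g.val < 2 * t) :=
      exists_mem_consecutivePairs_iff.not.1 (not_exists.2 hS)
    have hg' : g.val ≠ 0 := (ZMod.val_eq_zero g).not.2 hg
    have hlt := ZMod.val_lt g
    have hne : (-1 : ZMod (2 * t + 1)) ≠ 1 := fun h => by
      have := congrArg ZMod.val h
      omega
    obtain rfl | rfl : g = 1 ∨ g = -1 := by
      refine (Or.imp (ZMod.val_injective _ ·) (ZMod.val_injective _ ·)) ?_
      omega
    all_goals simp [intFam_consecutivePairs, hne]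

lemma count_dInt_biUnion_consecutivePairs (ht : 2 ≤ t) {c : ℕ} (hc₀ : 0 < c) (hc : c ≤ 3) :
    (dInt (univ.biUnion (consecutivePairs t))).count (c : ZMod (2 * t + 1)) = 2 * t - c - 2 := by
  rw [count_dInt_of_ne_zero _ (ZMod.natCast_ne_zero_of_lt hc₀ (by omega)), count_dExt,
    biUnion_consecutivePairs, filter_filter]
  simp only [mem_filter, mem_univ, true_and]
  -- a sum `c + x` that wraps around lands on `0` or `1`, outside the interval, as `c ≤ 3`
  have hshift : ∀ x : ZMod (2 * t + 1),
      (2 ≤ x.val ∧ x.val < 2 * t) ∧ 2 ≤ (c + x).val ∧ (c + x).val < 2 * t ↔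
        x.val ∈ Ico 2 (2 * t - c) := by
    intro x
    have hx := ZMod.val_lt x
    rw [mem_Ico, ZMod.val_add, ZMod.val_natCast_of_lt (by omega)]
    rcases lt_or_ge (c + x.val) (2 * t + 1) with h | h
    · rw [Nat.mod_eq_of_lt h]
      omega
    · rw [Nat.mod_eq_sub_mod h, Nat.mod_eq_of_lt (by omega)]
      omega
  rw [filter_congr fun x _ => hshift x,
    ZMod.card_filter_val_mem fun k hk => by rw [mem_Ico] at hk; omega, Nat.card_Ico]

lemma count_extFam_consecutivePairs (ht : 2 ≤ t) {c : ℕ} (hc₂ : 2 ≤ c) (hc : c ≤ 3) :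
    (ExtFam (consecutivePairs t)).count (c : ZMod (2 * t + 1)) = 2 * t - c - 2 := by
  have hc₀ : (c : ZMod (2 * t + 1)) ≠ 0 := ZMod.natCast_ne_zero_of_lt (by omega) (by omega)
  have h := count_dInt_biUnion pairwise_disjoint_consecutivePairs hc₀
  rw [count_dInt_biUnion_consecutivePairs ht (by omega) hc,
    (isDPDF_consecutivePairs (by omega)).2.2.2.2.2.1 _ hc₀
      (exists_natCast_mem_consecutivePairs hc₂ (by omega))] at h
  omega

lemma not_isEPDF_consecutivePairs (ht : 2 < t) (lam mu : ℕ) :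
    ¬ IsEPDF (ZMod (2 * t + 1)) (2 * t + 1) (t - 1) 2 lam mu (consecutivePairs t) := by
  intro hE
  have hlam : ∀ c : ℕ, 2 ≤ c → c ≤ 3 → 2 * t - c - 2 = lam := fun c hc₂ hc => by
    rw [← count_extFam_consecutivePairs (by omega) hc₂ hc]
    exact hE.2.2.2.2.2.1 _ (ZMod.natCast_ne_zero_of_lt (by omega) (by omega))
      (exists_natCast_mem_consecutivePairs hc₂ (by omega))
  have h₂ := hlam 2 le_rfl (by norm_num)
  have h₃ := hlam 3 (by norm_num) le_rfl
  omega

end ConsecutivePairs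

/-- for `t > 2`, in `G = ℤ_{2t+1}` the family of the `t−1` sets
`{2,3}, {4,5}, …, {2t−2, 2t−1}` is a `(2t+1, t−1, 2, 0, t−1)`-DPDF which is not a
`(2t+1, t−1, 2, λ, μ)`-EPDF for any `λ, μ`. -/
theorem dpdf_not_epdf (t : ℕ) (ht : 2 < t)
    (A : Fin (t - 1) → Finset (ZMod (2 * t + 1)))
    (hA : ∀ i : Fin (t - 1),
      A i = {((2 * (i : ℕ) + 2 : ℕ) : ZMod (2 * t + 1)),
             ((2 * (i : ℕ) + 3 : ℕ) : ZMod (2 * t + 1))}) :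
    IsDPDF (ZMod (2 * t + 1)) (2 * t + 1) (t - 1) 2 0 (t - 1) A ∧
    ∀ lam mu : ℕ, ¬ IsEPDF (ZMod (2 * t + 1)) (2 * t + 1) (t - 1) 2 lam mu A := by
  obtain rfl : A = consecutivePairs t := funext hA
  exact ⟨isDPDF_consecutivePairs (by omega), not_isEPDF_consecutivePairs ht⟩
end
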